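/- arXiv:math/0703880 — 7 statements merged into one kernel-verified Lean document; each statement's English description precedes it below -/
import Mathlib

section
/- Let S be a regular local ring of Krull dimension n ≥ 1 with maximal ideal M′, and let a = (a₁,…,aₙ) be a regular sequence on S with J(a) ⊆ M′². Then M′ⁿ ⊈ J(a); equivalently, the complete intersection A = S/J(a) of dimension zero and embedding dimension n satisfies Mⁿ ≠ 0 for its maximal ideal M, so its exponent is strictly greater than its embedding dimension n. -/
/-!
Let `y` be a regular system of parameters and suppose `M′ⁿ ⊆ J(a)`. As `J(a) ⊆ M′² = M′ J(y)`,
`a = C y` with the entries of `C` in `M′`, so `det C ∈ M′ⁿ ⊆ J(a)`; and `b := (yᵢⁿ)ᵢ` lies in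
`M′ⁿ ⊆ J(a)`, so `b = D a`. By Cramer's rule `det D · J(a) ⊆ J(b)`, hence `det (D C) ∈ J(b)`.
Both `D C` and `E := diag(yᵢⁿ⁻¹)` carry `y` to `b`. Since all syzygies of a regular sequence are
Koszul relations, the determinant of such a matrix is determined modulo `J(b)`, so
`∏ yᵢⁿ⁻¹ = det E ∈ J(y₁ⁿ, …, yₙⁿ)`. That is impossible for a regular sequence: peeling off one
factor `yⱼ` at a time by colon computations reduces it to `1 ∈ M′`.
-/

open IsLocalRing Matrix

section

variable {R : Type*} [CommRing R]

theorem Ideal.ofList_ofFn {n : ℕ} (y : Fin n → R) :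
    Ideal.ofList (List.ofFn y) = Ideal.span (Set.range y) := by
  simp [Ideal.ofList, List.mem_ofFn]; rfl

theorem Ideal.dotProduct_mem_span_range {ι : Type*} [Fintype ι] (w v : ι → R) :
    w ⬝ᵥ v ∈ Ideal.span (Set.range v) :=
  Ideal.sum_mem _ fun i _ => Ideal.mul_mem_left _ _ (Ideal.subset_span ⟨i, rfl⟩)

theorem Ideal.dotProduct_sub_mul_mem_span_image_compl {ι : Type*} [Fintype ι] [DecidableEq ι]
    (w v : ι → R) (i : ι) : w ⬝ᵥ v - w i * v i ∈ Ideal.span (v '' {i}ᶜ) := by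
  rw [dotProduct, ← Finset.sum_erase_add _ _ (Finset.mem_univ i), add_sub_cancel_right]
  exact Ideal.sum_mem _ fun j hj =>
    Ideal.mul_mem_left _ _ (Ideal.subset_span ⟨j, Finset.ne_of_mem_erase hj, rfl⟩)

theorem Ideal.mem_span_range_iff_exists_add_mul_mem {ι : Type*} (g : ι → R) (j : ι) {x : R} :
    x ∈ Ideal.span (Set.range g) ↔ ∃ a, x + a * g j ∈ Ideal.span (g '' {j}ᶜ) := by
  rw [← Ideal.mem_span_insert', ← Set.image_insert_eq, Set.insert_eq, Set.union_compl_self,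
    Set.image_univ]

theorem Ideal.exists_matrix_mulVec_eq_of_span_le_mul {κ ι : Type*} [Fintype ι] {I : Ideal R}
    {y : ι → R} {a : κ → R} (h : Ideal.span (Set.range a) ≤ I * Ideal.span (Set.range y)) :
    ∃ C : Matrix κ ι R, (∀ i j, C i j ∈ I) ∧ C *ᵥ y = a := by
  have hrow : ∀ k, ∃ c : ι → R, (∀ j, c j ∈ I) ∧ c ⬝ᵥ y = a k := by
    intro k
    have := h (Ideal.subset_span ⟨k, rfl⟩)
    rw [← Ideal.smul_eq_mul, Submodule.mem_ideal_smul_span_iff_exists_sum] at this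
    obtain ⟨c, hcI, hc⟩ := this
    exact ⟨c, hcI, by rw [← hc, Finsupp.sum_fintype _ _ (by simp)]; rfl⟩
  choose C hCI hC using hrow
  exact ⟨Matrix.of C, hCI, funext hC⟩

theorem List.ofFn_perm_append_succAbove {α : Type*} {n : ℕ} (w : Fin (n + 1) → α)
    (j : Fin (n + 1)) : (List.ofFn w).Perm (List.ofFn (w ∘ j.succAbove) ++ [w j]) := by
  rw [← Multiset.coe_eq_coe, ← Fin.univ_val_map, Fin.univ_succAbove _ j, ← Multiset.coe_add,
    ← Fin.univ_val_map]
  simp [add_comm]; rfl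

section Determinants

variable {ι : Type*} [Fintype ι] [DecidableEq ι]

theorem Matrix.det_mem_pow_card {I : Ideal R} {C : Matrix ι ι R} (hC : ∀ i j, C i j ∈ I) :
    C.det ∈ I ^ Fintype.card ι := by
  rw [det_apply]
  refine Ideal.sum_mem _ fun σ _ => Submodule.smul_of_tower_mem _ _ ?_
  simpa using Ideal.prod_mem_prod (s := Finset.univ) (I := fun _ => I) fun i _ => hC (σ i) i

theorem Matrix.adjugate_mulVec_mulVec (A : Matrix ι ι R) (v : ι → R) :
    A.adjugate *ᵥ (A *ᵥ v) = A.det • v := by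
  rw [mulVec_mulVec, adjugate_mul, smul_mulVec, one_mulVec]

theorem Matrix.det_mul_mem_span_mulVec (D : Matrix ι ι R) {a : ι → R} {x : R}
    (hx : x ∈ Ideal.span (Set.range a)) : D.det * x ∈ Ideal.span (Set.range (D *ᵥ a)) := by
  obtain ⟨c, rfl⟩ := (Submodule.mem_span_range_iff_exists_fun R).mp hx
  rw [Finset.mul_sum]
  refine Ideal.sum_mem _ fun i _ => ?_
  rw [smul_eq_mul, mul_left_comm, ← smul_eq_mul D.det, ← Pi.smul_apply,
    ← D.adjugate_mulVec_mulVec]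
  exact Ideal.mul_mem_left _ _ (Ideal.dotProduct_mem_span_range _ _)

end Determinants

section Koszul

variable {ι : Type*} [DecidableEq ι]

def koszulRelation (y : ι → R) (p q : ι) : ι → R :=
  y q • Pi.single p 1 - y p • Pi.single q 1

def koszulRelations (y : ι → R) : Submodule R (ι → R) :=
  Submodule.span R (Set.range fun pq : ι × ι => koszulRelation y pq.1 pq.2)

theorem koszulRelation_mem_koszulRelations (y : ι → R) (p q : ι) :
    koszulRelation y p q ∈ koszulRelations y :=
  Submodule.subset_span ⟨(p, q), rfl⟩

variable [Fintype ι]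

theorem dotProduct_eq_zero_of_mem_koszulRelations {y v : ι → R} (hv : v ∈ koszulRelations y) :
    v ⬝ᵥ y = 0 := by
  induction hv using Submodule.span_induction with
  | mem _ h =>
    obtain ⟨⟨p, q⟩, rfl⟩ := h
    simp [koszulRelation, sub_dotProduct, mul_comm]
  | zero => exact zero_dotProduct y
  | add u v _ _ hu hv => rw [add_dotProduct, hu, hv, add_zero]
  | smul c v _ hv => rw [smul_dotProduct, hv, smul_zero]

theorem Matrix.det_updateRow_koszulRelation_mem_span (H : Matrix ι ι R) (y : ι → R)
    (i p q : ι) : (H.updateRow i (koszulRelation y p q)).det ∈ Ideal.span ((H *ᵥ y) '' {i}ᶜ) := by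
  set H' := H.updateRow i (Pi.single p 1)
  have hdet :
      (H.updateRow i (koszulRelation y p q)).det = y q * H'.det - y p * H'.adjugate q i := by
    rw [adjugate_apply, updateRow_idem, ← cramer_transpose_apply, koszulRelation, map_sub,
      map_smul, map_smul, Pi.sub_apply, Pi.smul_apply, Pi.smul_apply, cramer_transpose_apply,
      cramer_transpose_apply, smul_eq_mul, smul_eq_mul]
  have hv : (H' *ᵥ y) i = y p := by simp [H', mulVec]
  have himage : (H' *ᵥ y) '' {i}ᶜ = (H *ᵥ y) '' {i}ᶜ :=
    Set.image_congr fun j hj => by simp [H', mulVec, updateRow_ne hj]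
  have := Ideal.dotProduct_sub_mul_mem_span_image_compl (H'.adjugate q) (H' *ᵥ y) i
  rw [← mulVec, adjugate_mulVec_mulVec, hv, himage, Pi.smul_apply, smul_eq_mul] at this
  rw [hdet]
  convert this using 1
  ring

theorem Matrix.det_mem_span_of_row_mem_koszulRelations {H : Matrix ι ι R} {y : ι → R} {i : ι}
    (hH : H i ∈ koszulRelations y) : H.det ∈ Ideal.span ((H *ᵥ y) '' {i}ᶜ) := by
  have hle : koszulRelations y ≤
      Submodule.comap (LinearMap.proj i ∘ₗ Hᵀ.cramer) (Ideal.span ((H *ᵥ y) '' {i}ᶜ)) :=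
    Submodule.span_le.mpr <| Set.range_subset_iff.mpr fun pq => by
      rw [SetLike.mem_coe, Submodule.mem_comap, LinearMap.comp_apply, LinearMap.proj_apply,
        cramer_transpose_apply]
      exact H.det_updateRow_koszulRelation_mem_span y i pq.1 pq.2
  have := hle hH
  rw [Submodule.mem_comap, LinearMap.comp_apply, LinearMap.proj_apply, cramer_transpose_apply,
    updateRow_eq_self] at this
  exact this

end Koszul

theorem Fin.snoc_zero_mem_koszulRelations {n : ℕ} {y : Fin (n + 1) → R} {v : Fin n → R}
    (hv : v ∈ koszulRelations (Fin.init y)) : Fin.snoc v 0 ∈ koszulRelations y := by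
  have hext (v : Fin n → R) :
      Fin.snoc v 0 = Function.ExtendByZero.linearMap R Fin.castSucc v := by
    ext i
    change _ = Function.extend Fin.castSucc v 0 i
    induction i using Fin.lastCases with
    | last =>
      rw [Fin.snoc_last, Function.extend_apply' _ _ _ fun ⟨i, hi⟩ => Fin.castSucc_ne_last i hi]
      rfl
    | cast i =>
      exact (Fin.snoc_castSucc ..).trans ((Fin.castSucc_injective n).extend_apply ..).symm
  rw [hext]
  induction hv using Submodule.span_induction with
  | mem _ h =>
    obtain ⟨⟨p, q⟩, rfl⟩ := h
    convert koszulRelation_mem_koszulRelations y p.castSucc q.castSucc using 1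
    rw [← hext]
    ext i
    induction i using Fin.lastCases with
    | last => simp [koszulRelation]
    | cast i => simp [koszulRelation, Fin.init, Pi.single_apply]
  | zero => simp
  | add u v _ _ hu hv => simpa using add_mem hu hv
  | smul c v _ hv => simpa using Submodule.smul_mem _ c hv

theorem Matrix.det_sub_det_mem_span_mulVec {ι : Type*} [Fintype ι] [LinearOrder ι] {y : ι → R}
    (hy : ∀ δ : ι → R, δ ⬝ᵥ y = 0 → δ ∈ koszulRelations y) {G E : Matrix ι ι R}
    (h : G *ᵥ y = E *ᵥ y) : G.det - E.det ∈ Ideal.span (Set.range (E *ᵥ y)) := by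
  have := (detRowAlternating (n := ι) (R := R)).toMultilinearMap.map_sub_map_piecewise
    G E Finset.univ
  simp only [Finset.mem_univ, true_implies] at this
  rw [show Finset.univ.piecewise E G = E from Finset.piecewise_univ E G] at this
  change G.det - E.det = _ at this
  rw [this]
  -- the `i`-th term has the rows of `G` above `i`, those of `E` below, and the syzygy
  -- `G i - E i` in row `i`
  refine Ideal.sum_mem _ fun i _ => ?_
  set H : Matrix ι ι R := fun j => if j < i then G j else if i = j then G j - E j else E j
  have hHi : H i = G i - E i := by simp [H]
  have hHy : ∀ j ≠ i, (H *ᵥ y) j = (E *ᵥ y) j := by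
    intro j hj
    by_cases hji : j < i
    · simpa [H, hji, mulVec] using congrFun h j
    · simp [H, hji, Ne.symm hj, mulVec]
  have hrow : H i ∈ koszulRelations y := hy _ (by
    rw [hHi, sub_dotProduct]
    exact sub_eq_zero.mpr (congrFun h i))
  refine Ideal.span_mono ?_ (det_mem_span_of_row_mem_koszulRelations hrow)
  rintro _ ⟨j, hj, rfl⟩
  exact ⟨j, (hHy j hj).symm⟩

namespace RingTheory.Sequence.IsWeaklyRegular

theorem mem_of_mul_mem_append {rs : List R} {r x : R} (h : IsWeaklyRegular R (rs ++ [r]))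
    (hx : x * r ∈ Ideal.ofList rs) : x ∈ Ideal.ofList rs := by
  have hr := (isWeaklyRegular_singleton_iff _ r).mp ((isWeaklyRegular_append_iff _ _ _).mp h).2
  rw [Ideal.smul_eq_mul, Ideal.mul_top] at hr
  rw [← Ideal.Quotient.eq_zero_iff_mem] at hx ⊢
  exact hr.right_eq_zero_of_smul (by simpa [mul_comm, Algebra.smul_def] using hx)

theorem mem_koszulRelations {n : ℕ} {y : Fin n → R}
    (hy : IsWeaklyRegular R (List.ofFn y)) {δ : Fin n → R} (hδ : δ ⬝ᵥ y = 0) :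
    δ ∈ koszulRelations y := by
  induction n with
  | zero => exact Subsingleton.elim δ 0 ▸ zero_mem _
  | succ n ih =>
    rw [List.ofFn_succ', List.concat_eq_append] at hy
    have hlast : δ (Fin.last n) ∈ Ideal.span (Set.range (Fin.init y)) := by
      rw [← Ideal.ofList_ofFn]
      refine hy.mem_of_mul_mem_append ?_
      rw [dotProduct, Fin.sum_univ_castSucc, add_eq_zero_iff_eq_neg'] at hδ
      rw [hδ, Ideal.ofList_ofFn]
      exact neg_mem (Ideal.dotProduct_mem_span_range (Fin.init δ) _)
    obtain ⟨e, he⟩ := (Submodule.mem_span_range_iff_exists_fun R).mp hlast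
    -- subtracting these Koszul relations clears the last coordinate of `δ`
    set B : Fin (n + 1) → R := ∑ k, e k • koszulRelation y (Fin.last n) k.castSucc
    have hB : B ∈ koszulRelations y := Submodule.sum_mem _ fun k _ =>
      Submodule.smul_mem _ _ (koszulRelation_mem_koszulRelations y _ _)
    have hlast0 : (δ - B) (Fin.last n) = 0 := by
      simp [B, koszulRelation, Finset.sum_apply, ← he, Fin.init]
    have hdot : Fin.init (δ - B) ⬝ᵥ Fin.init y = 0 := by
      have := sub_dotProduct δ B y
      rw [hδ, dotProduct_eq_zero_of_mem_koszulRelations hB, sub_zero, dotProduct,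
        Fin.sum_univ_castSucc, hlast0, zero_mul, add_zero] at this
      exact this
    have hsnoc := Fin.snoc_zero_mem_koszulRelations
      (ih ((isWeaklyRegular_append_iff _ _ _).mp hy).1 hdot)
    rw [← hlast0, Fin.snoc_init_self] at hsnoc
    simpa using add_mem hsnoc hB

variable [IsLocalRing R] [IsNoetherianRing R] {n : ℕ} {y : Fin n → R}

theorem append_succAbove {y : Fin (n + 1) → R} (hy : IsWeaklyRegular R (List.ofFn y))
    (hyM : ∀ i, y i ∈ maximalIdeal R) (j : Fin (n + 1)) :
    IsWeaklyRegular R (List.ofFn (y ∘ j.succAbove) ++ [y j]) :=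
  isWeaklyRegular_of_perm_of_subset_maximalIdeal hy (List.ofFn_perm_append_succAbove y j)
    (by rintro _ hr; obtain ⟨i, rfl⟩ := List.mem_ofFn.mp hr; exact hyM i)

theorem mem_of_mul_mem_span_compl (hy : IsWeaklyRegular R (List.ofFn y))
    (hyM : ∀ i, y i ∈ maximalIdeal R) (j : Fin n) {x : R}
    (hx : x * y j ∈ Ideal.span (y '' {j}ᶜ)) : x ∈ Ideal.span (y '' {j}ᶜ) := by
  cases n with
  | zero => exact j.elim0
  | succ n =>
    have hspan : Ideal.ofList (List.ofFn (y ∘ j.succAbove)) = Ideal.span (y '' {j}ᶜ) := by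
      rw [Ideal.ofList_ofFn, Set.range_comp, Fin.range_succAbove]
    rw [← hspan] at hx ⊢
    exact (hy.append_succAbove hyM j).mem_of_mul_mem_append hx

theorem update_pow (hy : IsWeaklyRegular R (List.ofFn y)) (hyM : ∀ i, y i ∈ maximalIdeal R)
    (j : Fin n) {k : ℕ} (hk : k ≠ 0) :
    IsWeaklyRegular R (List.ofFn (Function.update y j (y j ^ k))) := by
  cases n with
  | zero => exact j.elim0
  | succ n =>
    set w := Function.update y j (y j ^ k)
    have hw : w ∘ j.succAbove = y ∘ j.succAbove :=
      funext fun i => Function.update_of_ne (Fin.succAbove_ne j i) _ _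
    have hlast := (isWeaklyRegular_append_iff _ _ _).mp (hy.append_succAbove hyM j)
    refine isWeaklyRegular_of_perm_of_subset_maximalIdeal
      (rs := List.ofFn (y ∘ j.succAbove) ++ [y j ^ k])
      ((isWeaklyRegular_append_iff _ _ _).mpr ⟨hlast.1, ?_⟩) ?_ ?_
    · exact (isWeaklyRegular_singleton_iff _ _).mpr
        (((isWeaklyRegular_singleton_iff _ _).mp hlast.2).pow k)
    · simpa [w, hw] using (List.ofFn_perm_append_succAbove w j).symm
    · rintro _ hr
      rcases List.mem_append.mp hr with hr | hr
      · obtain ⟨i, rfl⟩ := List.mem_ofFn.mp hr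
        exact hyM _
      · rw [List.mem_singleton.mp hr]
        exact Ideal.pow_mem_of_mem _ (hyM j) k (Nat.pos_of_ne_zero hk)

theorem pow (hy : IsWeaklyRegular R (List.ofFn y)) (hyM : ∀ i, y i ∈ maximalIdeal R)
    {N : Fin n → ℕ} (hN : ∀ i, N i ≠ 0) : IsWeaklyRegular R (List.ofFn fun i => y i ^ N i) := by
  have hM (s : Finset (Fin n)) (i : Fin n) :
      s.piecewise (fun i => y i ^ N i) y i ∈ maximalIdeal R := by
    by_cases hi : i ∈ s
    · simpa [hi] using Ideal.pow_mem_of_mem _ (hyM i) _ (Nat.pos_of_ne_zero (hN i))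
    · simpa [hi] using hyM i
  suffices ∀ s : Finset (Fin n),
      IsWeaklyRegular R (List.ofFn (s.piecewise (fun i => y i ^ N i) y)) by
    simpa using this Finset.univ
  intro s
  induction s using Finset.induction_on with
  | empty => simpa using hy
  | insert j s hj ih =>
    rw [Finset.piecewise_insert]
    simpa [Finset.piecewise_eq_of_notMem _ _ _ hj] using ih.update_pow (hM s) j (hN j)

theorem mem_span_pow_update_of_mul_mem (hy : IsWeaklyRegular R (List.ofFn y))
    (hyM : ∀ i, y i ∈ maximalIdeal R) {N : Fin n → ℕ} (hN : ∀ i, N i ≠ 0) (j : Fin n) {x : R}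
    (hx : y j * x ∈ Ideal.span (Set.range fun i => y i ^ N i)) :
    x ∈ Ideal.span (Set.range fun i => y i ^ Function.update N j (N j - 1) i) := by
  have himage (m : ℕ) :
      (fun i => y i ^ Function.update N j m i) '' {j}ᶜ = (fun i => y i ^ N i) '' {j}ᶜ :=
    Set.image_congr fun i hi => by rw [Function.update_of_ne hi]
  obtain ⟨a, ha⟩ := (Ideal.mem_span_range_iff_exists_add_mul_mem _ j).mp hx
  have hN' : ∀ i, Function.update N j 1 i ≠ 0 := fun i => by
    rcases eq_or_ne i j with rfl | hi <;> simp [*]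
  -- `y j` is regular modulo the other `y i ^ N i`, since `y ^ (update N j 1)` is regular.
  have hcolon := (hy.pow hyM hN').mem_of_mul_mem_span_compl
    (fun i => Ideal.pow_mem_of_mem _ (hyM i) _ (Nat.pos_of_ne_zero (hN' i))) j
    (x := x + a * y j ^ (N j - 1)) (by
      rw [himage, Function.update_self, pow_one]
      convert ha using 1
      rw [← pow_sub_one_mul (hN j)]
      ring)
  exact (Ideal.mem_span_range_iff_exists_add_mul_mem _ j).mpr ⟨a, by simpa [himage] using hcolon⟩

theorem prod_pow_notMem_span_pow (hy : IsWeaklyRegular R (List.ofFn y))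
    (hyM : ∀ i, y i ∈ maximalIdeal R) {β N : Fin n → ℕ} (hβN : ∀ i, β i < N i) :
    ∏ i, y i ^ β i ∉ Ideal.span (Set.range fun i => y i ^ N i) := by
  induction β using WellFoundedLT.induction generalizing N with
  | _ β ih =>
  by_cases hβ : β = 0
  · subst hβ
    have hle : Ideal.span (Set.range fun i => y i ^ N i) ≤ maximalIdeal R :=
      Ideal.span_le.mpr <| Set.range_subset_iff.mpr fun i =>
        Ideal.pow_mem_of_mem _ (hyM i) _ (hβN i)
    simpa using fun h => Ideal.one_notMem _ (hle h)
  obtain ⟨j, hj : β j ≠ 0⟩ := Function.ne_iff.mp hβ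
  set β' := Function.update β j (β j - 1) with hβ'
  have hprod : ∏ i, y i ^ β i = y j * ∏ i, y i ^ β' i := by
    rw [hβ', ← Finset.mul_prod_erase _ _ (Finset.mem_univ j),
      ← Finset.mul_prod_erase _ (fun i => y i ^ Function.update β j (β j - 1) i)
        (Finset.mem_univ j), Function.update_self,
      ← mul_assoc, mul_pow_sub_one hj]
    congr 1
    exact Finset.prod_congr rfl fun i hi => by
      rw [Function.update_of_ne (Finset.ne_of_mem_erase hi)]
  have hβ'N : ∀ i, β' i < Function.update N j (N j - 1) i := fun i => by
    rcases eq_or_ne i j with rfl | hi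
    · have := hβN i
      simp only [hβ', Function.update_self]
      omega
    · simpa [hβ', hi] using hβN i
  rw [hprod]
  exact fun hmem => ih β' (update_lt_self_iff.mpr (by omega)) hβ'N
    (mem_span_pow_update_of_mul_mem hy hyM (fun i => Nat.ne_zero_of_lt (hβN i)) j hmem)

end RingTheory.Sequence.IsWeaklyRegular

end

theorem stmt_2_general {S : Type*} [CommRing S] [IsNoetherianRing S] [IsLocalRing S]
    {n : ℕ}
    (hregS : ∃ y : Fin n → S, RingTheory.Sequence.IsRegular S (List.ofFn y) ∧
      Ideal.span (Set.range y) = maximalIdeal S)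
    (a : Fin n → S)
    (ha : Ideal.span (Set.range a) ≤ (maximalIdeal S) ^ 2) :
    ¬ (maximalIdeal S) ^ n ≤ Ideal.span (Set.range a) := by
  intro hle
  obtain ⟨y, hy, hyspan⟩ := hregS
  have hyM : ∀ i, y i ∈ maximalIdeal S := fun i => hyspan ▸ Ideal.subset_span ⟨i, rfl⟩
  obtain ⟨C, hCM, rfl⟩ := Ideal.exists_matrix_mulVec_eq_of_span_le_mul (a := a) (y := y)
    (by rwa [hyspan, ← pow_two])
  set E : Matrix (Fin n) (Fin n) S := diagonal fun i => y i ^ (n - 1)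
  have hEy : E *ᵥ y = fun i => y i ^ n := funext fun i => by
    simp [E, mulVec_diagonal, pow_sub_one_mul i.pos.ne']
  obtain ⟨D, -, hD⟩ := Ideal.exists_matrix_mulVec_eq_of_span_le_mul (I := ⊤) (a := E *ᵥ y)
    (y := C *ᵥ y) <| by
      rw [Ideal.top_mul, Ideal.span_le, Set.range_subset_iff, hEy]
      exact fun i => hle (Ideal.pow_mem_pow (hyM i) n)
  have hDC : (D * C).det ∈ Ideal.span (Set.range (E *ᵥ y)) := by
    rw [det_mul, ← hD]
    exact D.det_mul_mem_span_mulVec (hle (by simpa using det_mem_pow_card hCM))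
  have hdiff := det_sub_det_mem_span_mulVec (fun _ => hy.toIsWeaklyRegular.mem_koszulRelations)
    (G := D * C) (E := E) (by rw [← mulVec_mulVec, hD])
  have hE : E.det ∈ Ideal.span (Set.range (E *ᵥ y)) := by
    simpa using sub_mem hDC hdiff
  rw [det_diagonal, hEy] at hE
  exact hy.toIsWeaklyRegular.prod_pow_notMem_span_pow hyM (fun i => Nat.sub_lt i.pos one_pos) hE

/-- **Corollary 1.5.** If `S` is a regular local ring of dimension `n ≥ 1` with maximal ideal
`M′` and `a` is a regular sequence of length `n` with `J(a) ⊆ M′²`, then `M′ⁿ ⊈ J(a)`;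
i.e. the zero-dimensional complete intersection `S/J(a)` of embedding dimension `n` has exponent
strictly greater than `n`. -/
theorem stmt_2 {S : Type*} [CommRing S] [IsNoetherianRing S] [IsLocalRing S]
    {n : ℕ} (hn : 1 ≤ n) (hdim : ringKrullDim S = n)
    (hregS : ∃ y : Fin n → S, RingTheory.Sequence.IsRegular S (List.ofFn y) ∧
      Ideal.span (Set.range y) = maximalIdeal S)
    (a : Fin n → S)
    (hreg : RingTheory.Sequence.IsRegular S (List.ofFn a))
    (ha : Ideal.span (Set.range a) ≤ (maximalIdeal S) ^ 2) :
    ¬ (maximalIdeal S) ^ n ≤ Ideal.span (Set.range a) :=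
  stmt_2_general hregS a ha
end

section
/- Let A be a Noetherian local ring whose maximal ideal M is generated by two elements x, y. If x·y = 0 and xA ∩ yA ≠ 0, then A is a complete intersection of dimension zero; concretely, there exists a 2×2 matrix ψ over A with (x, y)·ψ = (0, 0) and det(ψ) ≠ 0 (an (x,y)-Wiebe matrix). -/
open IsLocalRing Matrix

/-! A nonzero `z = a x = b y` in `xA ∩ yA` gives the syzygy `(a, -b)` of `(x, y)`, and `xy = 0`
gives the syzygy `(y, 0)`. The matrix with these two columns has determinant `-b y = -z ≠ 0`. -/

theorem vec2_vecMul_fin_two {R : Type*} [CommRing R] (x y a b c d : R) :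
    ![x, y] ᵥ* !![a, b; c, d] = ![x * a + y * c, x * b + y * d] := by
  ext j
  fin_cases j <;> simp [vecMul]

theorem exists_mul_eq_mul_ne_zero_of_span_inf_span_ne_bot {R : Type*} [CommRing R] {x y : R}
    (h : Ideal.span {x} ⊓ Ideal.span {y} ≠ ⊥) : ∃ a b : R, a * x = b * y ∧ b * y ≠ 0 := by
  obtain ⟨z, hz, hz0⟩ := Submodule.exists_mem_ne_zero_of_ne_bot h
  obtain ⟨a, rfl⟩ := Ideal.mem_span_singleton'.mp (Submodule.mem_inf.mp hz).1
  obtain ⟨b, hb⟩ := Ideal.mem_span_singleton'.mp (Submodule.mem_inf.mp hz).2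
  exact ⟨a, b, hb.symm, hb ▸ hz0⟩

theorem exists_vecMul_eq_zero_det_ne_zero_of_mul_eq_zero {R : Type*} [CommRing R] {x y a b : R}
    (hmul : x * y = 0) (hab : a * x = b * y) (hby : b * y ≠ 0) :
    ∃ ψ : Matrix (Fin 2) (Fin 2) R, ![x, y] ᵥ* ψ = 0 ∧ ψ.det ≠ 0 := by
  refine ⟨!![y, a; 0, -b], ?_, ?_⟩
  · rw [vec2_vecMul_fin_two, hmul, mul_zero, add_zero, mul_comm x a, hab, mul_neg, mul_comm y b,
      add_neg_cancel]
    simp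
  · rw [det_fin_two_of, mul_zero, sub_zero, mul_neg, mul_comm]
    exact neg_ne_zero.mpr hby

theorem stmt_7_general {A : Type*} [CommRing A]
    (x y : A)
    (hmul : x * y = 0)
    (hcap : Ideal.span {x} ⊓ Ideal.span {y} ≠ ⊥) :
    ∃ ψ : Matrix (Fin 2) (Fin 2) A, ![x, y] ᵥ* ψ = 0 ∧ ψ.det ≠ 0 := by
  obtain ⟨a, b, hab, hby⟩ := exists_mul_eq_mul_ne_zero_of_span_inf_span_ne_bot hcap
  exact exists_vecMul_eq_zero_det_ne_zero_of_mul_eq_zero hmul hab hby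

/-- **Proposition 2.14.** Let `A` be a Noetherian local ring whose maximal ideal is generated
by two elements `x, y`. If `xy = 0` and `xA ∩ yA ≠ 0`, then `A` is a complete intersection of
dimension zero: there is a `2 × 2` matrix `ψ` with `(x,y)·ψ = (0,0)` and `det(ψ) ≠ 0`. -/
theorem stmt_7 {A : Type*} [CommRing A] [IsNoetherianRing A] [IsLocalRing A]
    (x y : A) (hxy : Ideal.span {x, y} = maximalIdeal A)
    (hmul : x * y = 0)
    (hcap : Ideal.span {x} ⊓ Ideal.span {y} ≠ ⊥) :
    ∃ ψ : Matrix (Fin 2) (Fin 2) A, ![x, y] ᵥ* ψ = 0 ∧ ψ.det ≠ 0 :=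
  stmt_7_general x y hmul hcap
end

section
/- Let S be a regular local ring of Krull dimension two with maximal ideal M′. Let Q be an ideal of S generated by a regular sequence of length two (a parameter ideal) with Q ⊆ M′². Then for every x′ ∈ M′ \ M′² there exist z′ ∈ M′ and g′ ∈ M′² such that Q is generated by the two elements x′·z′ and g′. -/
/-!
Write `M = (y₀, y₁)`. Since `x' ∉ M²`, one of its coefficients in `y₀, y₁` is a unit, so
`M = (x', t)` for some `t`, and `S/(x')` is a Noetherian local ring with principal maximal
ideal `(t)`. By Krull's intersection theorem every nonzero element of it is associated to a
power of `t`, so divisibility there is total: say `q₁ ≡ c q₂ mod x'`, i.e. `q₁ = c q₂ + x' z`.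
Then `Q = (x' z, q₂)`, and `z` is not a unit because `x' z = q₁ - c q₂ ∈ M²` while `x' ∉ M²`.
-/

open IsLocalRing

theorem Ideal.span_pair_unit_mul_add {R : Type*} [CommRing R] {a y₀ y₁ : R} (ha : IsUnit a)
    (b : R) : Ideal.span {a * y₀ + b * y₁, y₁} = Ideal.span {y₀, y₁} := by
  rw [Ideal.span_pair_add_mul_right, Ideal.span_insert, Ideal.span_singleton_mul_left_unit ha,
    ← Ideal.span_insert]

namespace IsLocalRing

variable {R : Type*} [CommRing R] [IsLocalRing R]

theorem exists_associated_pow_of_maximalIdeal_eq_span_singleton [IsNoetherianRing R] {t r : R}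
    (ht : maximalIdeal R = Ideal.span {t}) (hr : r ≠ 0) : ∃ n, Associated (t ^ n) r := by
  classical
  have hpow (n : ℕ) : maximalIdeal R ^ n = Ideal.span {t ^ n} := by
    rw [ht, Ideal.span_singleton_pow]
  have hex : ∃ n, r ∉ maximalIdeal R ^ n := by
    by_contra! h
    have hbot := (maximalIdeal R).iInf_pow_eq_bot_of_isLocalRing (maximalIdeal.isMaximal R).ne_top
    exact hr (by simpa [hbot] using Ideal.mem_iInf.mpr h)
  have hfind : Nat.find hex ≠ 0 := fun h => Nat.find_spec hex (by simp [h])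
  obtain ⟨n, hn, hn'⟩ : ∃ n, r ∈ maximalIdeal R ^ n ∧ r ∉ maximalIdeal R ^ (n + 1) :=
    ⟨Nat.find hex - 1, not_not.mp (Nat.find_min hex (by omega)),
      by rw [Nat.sub_add_cancel (by omega)]; exact Nat.find_spec hex⟩
  obtain ⟨u, rfl⟩ := Ideal.mem_span_singleton.mp (hpow n ▸ hn)
  have hu : IsUnit u := by
    by_contra hu
    obtain ⟨v, rfl⟩ := Ideal.mem_span_singleton.mp (ht ▸ (mem_maximalIdeal u).mpr hu)
    exact hn' (hpow (n + 1) ▸ Ideal.mem_span_singleton.mpr ⟨v, by ring⟩)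
  exact ⟨n, hu.unit, rfl⟩

theorem dvd_or_dvd_of_maximalIdeal_eq_span_singleton [IsNoetherianRing R] {t : R}
    (ht : maximalIdeal R = Ideal.span {t}) (a b : R) : a ∣ b ∨ b ∣ a := by
  rcases eq_or_ne a 0 with rfl | ha
  · exact Or.inr (dvd_zero b)
  rcases eq_or_ne b 0 with rfl | hb
  · exact Or.inl (dvd_zero a)
  obtain ⟨m, hm⟩ := exists_associated_pow_of_maximalIdeal_eq_span_singleton ht ha
  obtain ⟨n, hn⟩ := exists_associated_pow_of_maximalIdeal_eq_span_singleton ht hb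
  rw [← hm.dvd_iff_dvd_left, ← hm.dvd_iff_dvd_right, ← hn.dvd_iff_dvd_left,
    ← hn.dvd_iff_dvd_right]
  exact (le_total m n).imp (pow_dvd_pow t) (pow_dvd_pow t)

theorem exists_maximalIdeal_eq_span_pair_of_notMem_sq {y₀ y₁ x : R}
    (hM : maximalIdeal R = Ideal.span {y₀, y₁}) (hxM : x ∈ maximalIdeal R)
    (hx : x ∉ maximalIdeal R ^ 2) : ∃ t, maximalIdeal R = Ideal.span {x, t} := by
  obtain ⟨a, b, rfl⟩ := Ideal.mem_span_pair.mp (hM ▸ hxM)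
  by_cases ha : IsUnit a
  · exact ⟨y₁, by rw [hM, Ideal.span_pair_unit_mul_add ha]⟩
  by_cases hb : IsUnit b
  · refine ⟨y₀, ?_⟩
    rw [hM, add_comm, Ideal.span_pair_comm (x := y₀), Ideal.span_pair_unit_mul_add hb]
  have hy₀ : y₀ ∈ maximalIdeal R := hM ▸ Ideal.subset_span (by simp)
  have hy₁ : y₁ ∈ maximalIdeal R := hM ▸ Ideal.subset_span (by simp)
  refine absurd ?_ hx
  rw [sq]
  exact add_mem (Ideal.mul_mem_mul ((mem_maximalIdeal a).mpr ha) hy₀)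
    (Ideal.mul_mem_mul ((mem_maximalIdeal b).mpr hb) hy₁)

theorem mk_dvd_or_dvd_of_maximalIdeal_eq_span_pair [IsNoetherianRing R] {x t : R}
    (hM : maximalIdeal R = Ideal.span {x, t}) (a b : R) :
    Ideal.Quotient.mk (Ideal.span {x}) a ∣ Ideal.Quotient.mk (Ideal.span {x}) b ∨
      Ideal.Quotient.mk (Ideal.span {x}) b ∣ Ideal.Quotient.mk (Ideal.span {x}) a := by
  set mk := Ideal.Quotient.mk (Ideal.span {x})
  have hxM : Ideal.span {x} ≤ maximalIdeal R := by
    rw [hM]; exact Ideal.span_mono (by simp)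
  have : Nontrivial (R ⧸ Ideal.span {x}) :=
    Ideal.Quotient.nontrivial_iff.mpr (ne_top_of_le_ne_top (maximalIdeal.isMaximal R).ne_top hxM)
  have : IsLocalRing (R ⧸ Ideal.span {x}) := .of_surjective' mk Ideal.Quotient.mk_surjective
  refine dvd_or_dvd_of_maximalIdeal_eq_span_singleton (t := mk t) ?_ _ _
  rw [← map_maximalIdeal_of_surjective mk Ideal.Quotient.mk_surjective, hM, Ideal.map_span,
    Set.image_pair, Ideal.Quotient.eq_zero_iff_mem.mpr (Ideal.mem_span_singleton_self x),
    Ideal.span_insert_zero]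

theorem exists_span_pair_eq_of_mk_dvd {x q₁ q₂ : R} (hx : x ∉ maximalIdeal R ^ 2)
    (hq₁ : q₁ ∈ maximalIdeal R ^ 2) (hq₂ : q₂ ∈ maximalIdeal R ^ 2)
    (hdvd : Ideal.Quotient.mk (Ideal.span {x}) q₂ ∣ Ideal.Quotient.mk (Ideal.span {x}) q₁) :
    ∃ z ∈ maximalIdeal R, Ideal.span {q₁, q₂} = Ideal.span {x * z, q₂} := by
  obtain ⟨c, hc⟩ := hdvd
  obtain ⟨c, rfl⟩ := Ideal.Quotient.mk_surjective c
  obtain ⟨z, hz⟩ : x ∣ q₁ - q₂ * c := by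
    rwa [← map_mul, Ideal.Quotient.eq, Ideal.mem_span_singleton] at hc
  have hxz : x * z ∈ maximalIdeal R ^ 2 := hz ▸ sub_mem hq₁ (Ideal.mul_mem_right c _ hq₂)
  refine ⟨z, ?_, ?_⟩
  · by_contra hzM
    have hz : IsUnit z := not_not.mp ((mem_maximalIdeal z).not.mp hzM)
    exact hx ((Ideal.mul_unit_mem_iff_mem _ hz).mp hxz)
  · rw [← hz, ← Ideal.span_pair_add_right_mul (q₁ - q₂ * c) q₂ c, sub_add_cancel]

end IsLocalRing

theorem stmt_9_general {S : Type*} [CommRing S] [IsNoetherianRing S] [IsLocalRing S]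
    (hregS : ∃ y : Fin 2 → S, RingTheory.Sequence.IsRegular S (List.ofFn y) ∧
      Ideal.span (Set.range y) = maximalIdeal S)
    (Q : Ideal S) (q₁ q₂ : S)
    (hQ : Q = Ideal.span {q₁, q₂})
    (hQM : Q ≤ (maximalIdeal S) ^ 2) :
    ∀ x' ∈ maximalIdeal S, x' ∉ (maximalIdeal S) ^ 2 →
      ∃ z' ∈ maximalIdeal S, ∃ g' ∈ (maximalIdeal S) ^ 2,
        Q = Ideal.span {x' * z', g'} := by
  intro x' hx'M hx'
  obtain ⟨y, -, hy⟩ := hregS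
  have hM : maximalIdeal S = Ideal.span {y 0, y 1} := by
    rw [← hy]; congr 1; simp [Set.ext_iff, eq_comm]
  obtain ⟨t, ht⟩ := exists_maximalIdeal_eq_span_pair_of_notMem_sq hM hx'M hx'
  have hq₁ : q₁ ∈ maximalIdeal S ^ 2 := hQM (hQ ▸ Ideal.subset_span (by simp))
  have hq₂ : q₂ ∈ maximalIdeal S ^ 2 := hQM (hQ ▸ Ideal.subset_span (by simp))
  subst hQ
  rcases mk_dvd_or_dvd_of_maximalIdeal_eq_span_pair ht q₁ q₂ with h | h
  · obtain ⟨z, hz, hspan⟩ := exists_span_pair_eq_of_mk_dvd hx' hq₂ hq₁ h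
    exact ⟨z, hz, q₁, hq₁, by rw [Ideal.span_pair_comm, hspan]⟩
  · obtain ⟨z, hz, hspan⟩ := exists_span_pair_eq_of_mk_dvd hx' hq₁ hq₂ h
    exact ⟨z, hz, q₂, hq₂, hspan⟩

/-- **Corollary 2.16.** Let `S` be a regular local ring of Krull dimension two with maximal
ideal `M′`, and let `Q ⊆ M′²` be an ideal generated by a regular sequence of length two.
Then for every `x′ ∈ M′ \ M′²` there are `z′ ∈ M′` and `g′ ∈ M′²` such that `Q = (x′z′, g′)`. -/
theorem stmt_9 {S : Type*} [CommRing S] [IsNoetherianRing S] [IsLocalRing S]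
    (hdim : ringKrullDim S = 2)
    (hregS : ∃ y : Fin 2 → S, RingTheory.Sequence.IsRegular S (List.ofFn y) ∧
      Ideal.span (Set.range y) = maximalIdeal S)
    (Q : Ideal S) (q₁ q₂ : S)
    (hQ : Q = Ideal.span {q₁, q₂})
    (hreg : RingTheory.Sequence.IsRegular S [q₁, q₂])
    (hQM : Q ≤ (maximalIdeal S) ^ 2) :
    ∀ x' ∈ maximalIdeal S, x' ∉ (maximalIdeal S) ^ 2 →
      ∃ z' ∈ maximalIdeal S, ∃ g' ∈ (maximalIdeal S) ^ 2,
        Q = Ideal.span {x' * z', g'} :=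
  stmt_9_general hregS Q q₁ q₂ hQ hQM
end

section
/- Let A be an Artinian local ring with maximal ideal M whose socle satisfies (0 : M) = vA for some v ≠ 0 (A is zero-dimensional Gorenstein). Suppose v = a_r·a_{r-1}⋯a₁ is a factorization of v (r ≥ 1), and set I₀ = 0 and Iᵢ = (0 : (aᵢ⋯a₁)A) for 1 ≤ i ≤ r. Then: (1) I₀ ⊆ I₁ ⊆ ⋯ ⊆ I_r = M; (2) I_{i-1} : Iᵢ = I_{i-1} + aᵢ·A for 1 ≤ i ≤ r; (3) Iᵢ : M = Iᵢ + (a_r⋯a_{i+1})·A for 0 ≤ i ≤ r (with the empty product for i = r read as 1); and (4) for each i, the inclusion I_{i-1} ⊆ Iᵢ is an equality if and only if aᵢ is a unit of A (so the chain is strict exactly when every aᵢ is a non-unit). -/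
/-!
The key fact is that in a zero-dimensional Gorenstein local ring every principal ideal is its
own double annihilator: `0 : (0 : xA) = xA`. It follows from the length inequality
`ℓ(0 : J) ≤ ℓ(A/J)`, proved by enlarging `J` one socle element `y` of `A/J` at a time: `z ↦ zy`
maps `0 : J` into the simple socle `vA` with kernel `0 : (J + yA)`. For `J = 0 : x` we have
`A/J ≅ xA ⊆ 0 : J`, which forces equality.

The rest is computation. Since `z ∈ (0 : x) : J` iff `zx ∈ 0 : J`, whenever `0 : J = yxA` we get
`(0 : x) : J = (0 : x) + yA`; this applies to `J = M`, as `0 : M = vA`, and to `J = 0 : ax` by the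
key fact. If `0 : x = 0 : ax`, the key fact gives `xA = axA`, so `(1 - ta)x = 0` for some `t`,
and `a` is a unit.
-/

open IsLocalRing Finset

namespace Fin

variable {M : Type*} [CommMonoid M] {r : ℕ} (f : Fin r → M)

lemma prod_filter_val_lt_succ (i : Fin r) :
    ∏ j ∈ univ.filter (fun j : Fin r => (j : ℕ) < i + 1), f j
      = f i * ∏ j ∈ univ.filter (fun j : Fin r => (j : ℕ) < i), f j := by
  rw [← prod_insert (by simp)]
  congr 1
  ext j
  simp only [mem_filter, mem_insert, mem_univ, true_and, Fin.ext_iff]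
  omega

lemma prod_filter_val_lt_mul_prod_filter_le_val (i : ℕ) :
    (∏ j ∈ univ.filter (fun j : Fin r => (j : ℕ) < i), f j)
      * ∏ j ∈ univ.filter (fun j : Fin r => i ≤ (j : ℕ)), f j = ∏ j, f j := by
  simp_rw [← not_lt]
  exact prod_filter_mul_prod_filter_not _ _ _

end Fin

section CommRing

variable {A : Type*} [CommRing A]

@[simp]
lemma Ideal.mem_annihilator_span_singleton {x z : A} :
    z ∈ (Ideal.span {x}).annihilator ↔ z * x = 0 :=
  Submodule.mem_annihilator_span_singleton x z

lemma colon_annihilator_eq_of_annihilator_eq {J : Ideal A} {x y : A}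
    (hJ : J.annihilator = Ideal.span {y * x}) :
    (Ideal.span {x}).annihilator.colon J = (Ideal.span {x}).annihilator + Ideal.span {y} := by
  ext z
  have hzx : z ∈ (Ideal.span {x}).annihilator.colon J ↔ z * x ∈ J.annihilator := by
    simp only [Submodule.mem_colon, SetLike.mem_coe, smul_eq_mul,
      Ideal.mem_annihilator_span_singleton]
    rw [Submodule.mem_annihilator]
    exact forall₂_congr fun p _ => by rw [smul_eq_mul, mul_right_comm]
  rw [hzx, hJ, Ideal.mem_span_singleton', Submodule.add_eq_sup, Submodule.mem_sup]
  simp only [Ideal.mem_annihilator_span_singleton, Ideal.mem_span_singleton']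
  constructor
  · rintro ⟨t, ht⟩
    exact ⟨z - t * y, by rw [sub_mul, mul_assoc, ht, sub_self], t * y, ⟨t, rfl⟩, sub_add_cancel z _⟩
  · rintro ⟨w, hw, _, ⟨t, rfl⟩, rfl⟩
    exact ⟨t, by rw [add_mul, hw, zero_add, mul_assoc]⟩

lemma Module.length_span_singleton (x : A) :
    Module.length A (Ideal.span {x}) = Module.length A (A ⧸ (Ideal.span {x}).annihilator) := by
  rw [← Ideal.submodule_span_eq, Ideal.annihilator_span_singleton_eq_torsionOf]
  exact (Ideal.quotTorsionOfEquivSpanSingleton A A x).length_eq.symm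

variable [IsLocalRing A]

lemma annihilator_span_singleton_eq_maximalIdeal {v : A} (hv0 : v ≠ 0)
    (hvM : v ∈ (maximalIdeal A).annihilator) :
    (Ideal.span {v}).annihilator = maximalIdeal A := by
  refine le_antisymm (fun z hz => ?_) (fun m hm => ?_)
  · rw [Ideal.mem_annihilator_span_singleton] at hz
    exact (mem_maximalIdeal z).mpr fun hu => hv0 ((hu.mul_right_eq_zero).mp hz)
  · rw [Ideal.mem_annihilator_span_singleton, mul_comm]
    exact Submodule.mem_annihilator.mp hvM m hm

lemma length_span_singleton_eq_one {v : A} (hv0 : v ≠ 0)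
    (hvM : v ∈ (maximalIdeal A).annihilator) :
    Module.length A (Ideal.span {v}) = 1 := by
  rw [Module.length_span_singleton, annihilator_span_singleton_eq_maximalIdeal hv0 hvM,
    Module.length_eq_one_iff, isSimpleModule_iff_isCoatom, ← Ideal.isMaximal_def]
  exact maximalIdeal.isMaximal A

lemma length_annihilator_le_length_annihilator_sup_add_one {v : A} (hv0 : v ≠ 0)
    (hsoc : (maximalIdeal A).annihilator = Ideal.span {v}) {J : Ideal A} {y : A}
    (hy : ∀ m ∈ maximalIdeal A, y * m ∈ J) :
    Module.length A J.annihilator ≤ Module.length A (J ⊔ Ideal.span {y}).annihilator + 1 := by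
  have hle : (J ⊔ Ideal.span {y}).annihilator ≤ J.annihilator :=
    Submodule.annihilator_mono le_sup_left
  let φ : J.annihilator →ₗ[A] A := LinearMap.mulRight A y ∘ₗ J.annihilator.subtype
  have hker : LinearMap.ker φ = LinearMap.range (Submodule.inclusion hle) := by
    rw [Submodule.range_inclusion]
    ext ⟨z, hz⟩
    simp [φ, Submodule.annihilator_sup]
  have hrange : LinearMap.range φ ≤ Ideal.span {v} := by
    rw [← hsoc]
    rintro _ ⟨⟨z, hz⟩, rfl⟩
    refine Submodule.mem_annihilator.mpr fun m hm => ?_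
    simpa [φ, mul_assoc] using Submodule.mem_annihilator.mp hz _ (hy m hm)
  calc Module.length A J.annihilator
      = Module.length A (J ⊔ Ideal.span {y}).annihilator + Module.length A (LinearMap.range φ) :=
        Module.length_eq_add_of_exact (Submodule.inclusion hle) φ.rangeRestrict
          (Submodule.inclusion_injective hle) φ.surjective_rangeRestrict
          (LinearMap.exact_iff.mpr (by rw [LinearMap.ker_rangeRestrict, hker]))
    _ ≤ Module.length A (J ⊔ Ideal.span {y}).annihilator + Module.length A (Ideal.span {v}) := by
        gcongr
        exact Module.length_le_of_injective _ (Submodule.inclusion_injective hrange)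
    _ = _ := by rw [length_span_singleton_eq_one hv0 (hsoc ▸ Ideal.mem_span_singleton_self v)]

end CommRing

lemma Submodule.length_quotient_add_one_le {R M : Type*} [Ring R] [AddCommGroup M] [Module R M]
    [IsArtinian R M] [IsNoetherian R M] {N N' : Submodule R M} (h : N < N') :
    Module.length R (M ⧸ N') + 1 ≤ Module.length R (M ⧸ N) := by
  rw [Module.length_quotient, Module.length_quotient]
  exact Order.add_one_le_of_lt (Order.coheight_strictAnti h (Order.coheight_lt_top _))

section ArtinianLocal

variable {A : Type*} [CommRing A] [IsArtinianRing A] [IsLocalRing A]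

lemma exists_notMem_forall_mul_mem_of_ne_top {J : Ideal A} (hJ : J ≠ ⊤) :
    ∃ y ∉ J, ∀ m ∈ maximalIdeal A, y * m ∈ J := by
  obtain ⟨n, hn⟩ := (isArtinianRing_iff_isNilpotent_maximalIdeal A).mp inferInstance
  suffices ∀ k, maximalIdeal A ^ k ≤ J → ∃ y ∉ J, ∀ m ∈ maximalIdeal A, y * m ∈ J from
    this n (by rw [hn]; exact bot_le)
  intro k
  induction k with
  | zero => exact fun h => absurd (top_le_iff.mp (by simpa using h)) hJ
  | succ k ih =>
    intro h
    by_cases hk : maximalIdeal A ^ k ≤ J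
    · exact ih hk
    obtain ⟨y, hyk, hyJ⟩ := SetLike.not_le_iff_exists.mp hk
    exact ⟨y, hyJ, fun m hm => h (pow_succ (maximalIdeal A) k ▸ Ideal.mul_mem_mul hyk hm)⟩

variable {v : A} (hv0 : v ≠ 0) (hsoc : (maximalIdeal A).annihilator = Ideal.span {v})
include hv0 hsoc

lemma length_annihilator_le_length_quotient (J : Ideal A) :
    Module.length A J.annihilator ≤ Module.length A (A ⧸ J) := by
  induction J using WellFoundedGT.induction with
  | _ J ih =>
  by_cases hJ : J = ⊤
  · subst hJ
    have hbot : (⊤ : Ideal A).annihilator = ⊥ := eq_bot_iff.mpr fun z hz => by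
      simpa using Submodule.mem_annihilator.mp hz 1 trivial
    rw [hbot, Module.length_bot]
    exact zero_le
  obtain ⟨y, hyJ, hy⟩ := exists_notMem_forall_mul_mem_of_ne_top hJ
  have hlt : J < J ⊔ Ideal.span {y} :=
    left_lt_sup.mpr (by rwa [Ideal.span_singleton_le_iff_mem])
  calc Module.length A J.annihilator
      ≤ Module.length A (J ⊔ Ideal.span {y}).annihilator + 1 :=
        length_annihilator_le_length_annihilator_sup_add_one hv0 hsoc hy
    _ ≤ Module.length A (A ⧸ J ⊔ Ideal.span {y}) + 1 := by gcongr; exact ih _ hlt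
    _ ≤ Module.length A (A ⧸ J) := Submodule.length_quotient_add_one_le hlt

lemma annihilator_annihilator_span_singleton (x : A) :
    (Ideal.span {x}).annihilator.annihilator = Ideal.span {x} := by
  have hle : Ideal.span {x} ≤ (Ideal.span {x}).annihilator.annihilator := by
    rw [Ideal.span_singleton_le_iff_mem, Submodule.mem_annihilator]
    intro z hz
    rw [Ideal.mem_annihilator_span_singleton] at hz
    rw [smul_eq_mul, mul_comm, hz]
  refine (eq_of_le_of_not_lt hle fun hlt => ?_).symm
  have hlen := length_annihilator_le_length_quotient hv0 hsoc (Ideal.span {x}).annihilator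
  rw [← Module.length_span_singleton, Module.length_submodule, Module.length_submodule] at hlen
  exact (Submodule.height_strictMono hlt).not_ge hlen

lemma colon_annihilator_span_singleton_mul (x a : A) :
    (Ideal.span {x}).annihilator.colon (Ideal.span {a * x}).annihilator
      = (Ideal.span {x}).annihilator + Ideal.span {a} :=
  colon_annihilator_eq_of_annihilator_eq (annihilator_annihilator_span_singleton hv0 hsoc _)

lemma annihilator_span_singleton_eq_mul_iff_isUnit {x : A} (hx : x ≠ 0) (a : A) :
    (Ideal.span {x}).annihilator = (Ideal.span {a * x}).annihilator ↔ IsUnit a := by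
  refine ⟨fun h => ?_, fun ha => by rw [Ideal.span_singleton_mul_left_unit ha]⟩
  have hspan := congrArg Submodule.annihilator h
  rw [annihilator_annihilator_span_singleton hv0 hsoc,
    annihilator_annihilator_span_singleton hv0 hsoc] at hspan
  obtain ⟨t, ht⟩ := Ideal.mem_span_singleton'.mp (hspan ▸ Ideal.mem_span_singleton_self x)
  have h1 : ¬ IsUnit (1 - t * a) := fun hu =>
    hx (hu.mul_right_eq_zero.mp (by rw [sub_mul, one_mul, mul_assoc, ht, sub_self]))
  exact isUnit_of_mul_isUnit_right ((isUnit_or_isUnit_one_sub_self (t * a)).resolve_right h1)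

end ArtinianLocal

-- `a i` is the paper's `a_{i+1}`, so `I i` is the paper's `(0 : (a_i ⋯ a_1)A)`.
theorem stmt_10_general {A : Type*} [CommRing A] [IsArtinianRing A] [IsLocalRing A]
    {r : ℕ} (a : Fin r → A) (v : A) (hv0 : v ≠ 0)
    (hsoc : (⊥ : Ideal A).colon (maximalIdeal A) = Ideal.span {v})
    (hfac : v = ∏ i, a i)
    (I : ℕ → Ideal A)
    (hI : ∀ i : ℕ, I i = (⊥ : Ideal A).colon
      (Ideal.span {∏ j ∈ Finset.univ.filter (fun j : Fin r => (j : ℕ) < i), a j})) :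
    (∀ i : Fin r, I (i : ℕ) ≤ I ((i : ℕ) + 1)) ∧
    I r = maximalIdeal A ∧
    (∀ i : Fin r, (I (i : ℕ)).colon (I ((i : ℕ) + 1)) = I (i : ℕ) + Ideal.span {a i}) ∧
    (∀ i : ℕ, i ≤ r → (I i).colon (maximalIdeal A) =
      I i + Ideal.span {∏ j ∈ Finset.univ.filter (fun j : Fin r => i ≤ (j : ℕ)), a j}) ∧
    (∀ i : Fin r, I (i : ℕ) = I ((i : ℕ) + 1) ↔ IsUnit (a i)) := by
  rw [Submodule.bot_colon] at hsoc
  simp only [Submodule.bot_colon] at hI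
  have hprod_ne_zero (i : ℕ) : ∏ j ∈ univ.filter (fun j : Fin r => (j : ℕ) < i), a j ≠ 0 :=
    left_ne_zero_of_mul (by rwa [Fin.prod_filter_val_lt_mul_prod_filter_le_val, ← hfac])
  refine ⟨fun i => ?_, ?_, fun i => ?_, fun i _ => ?_, fun i => ?_⟩
  · rw [hI, hI, Fin.prod_filter_val_lt_succ]
    exact Submodule.annihilator_mono (Ideal.span_singleton_le_span_singleton.mpr (dvd_mul_left _ _))
  · rw [hI, filter_true_of_mem fun j _ => j.isLt, ← hfac]
    exact annihilator_span_singleton_eq_maximalIdeal hv0 (hsoc ▸ Ideal.mem_span_singleton_self v)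
  · rw [hI, hI, Fin.prod_filter_val_lt_succ]
    exact colon_annihilator_span_singleton_mul hv0 hsoc _ _
  · rw [hI]
    refine colon_annihilator_eq_of_annihilator_eq ?_
    rw [hsoc, mul_comm, Fin.prod_filter_val_lt_mul_prod_filter_le_val, hfac]
  · rw [hI, hI, Fin.prod_filter_val_lt_succ]
    exact annihilator_span_singleton_eq_mul_iff_isUnit hv0 hsoc (hprod_ne_zero i) _

/-- **Proposition 3.2 (ii).** Let `A` be a zero-dimensional Gorenstein local ring, with socle
`(0 : M) = vA`, `v ≠ 0`, and let `v = a_r ⋯ a₁` be a factorization of `v` (here `a : Fin r → A`,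
with `a i` playing the role of `a_{i+1}`). Set `I i = (0 : (a_i ⋯ a₁)A)`, i.e. the annihilator
of the product of the first `i` factors (so `I 0 = 0`). Then `I 0 ⊆ I 1 ⊆ ⋯ ⊆ I r = M`,
`I_{i-1} : I_i = I_{i-1} + a_i A`, `I_i : M = I_i + (a_r ⋯ a_{i+1}) A` (empty product read
as `1`), and the inclusion `I_{i-1} ⊆ I_i` is an equality exactly when `a_i` is a unit. -/
theorem stmt_10 {A : Type*} [CommRing A] [IsArtinianRing A] [IsLocalRing A]
    {r : ℕ} (hr : 1 ≤ r) (a : Fin r → A) (v : A) (hv0 : v ≠ 0)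
    (hsoc : (⊥ : Ideal A).colon (maximalIdeal A) = Ideal.span {v})
    (hfac : v = ∏ i, a i)
    (I : ℕ → Ideal A)
    (hI : ∀ i : ℕ, I i = (⊥ : Ideal A).colon
      (Ideal.span {∏ j ∈ Finset.univ.filter (fun j : Fin r => (j : ℕ) < i), a j})) :
    (∀ i : Fin r, I (i : ℕ) ≤ I ((i : ℕ) + 1)) ∧
    I r = maximalIdeal A ∧
    (∀ i : Fin r, (I (i : ℕ)).colon (I ((i : ℕ) + 1)) = I (i : ℕ) + Ideal.span {a i}) ∧
    (∀ i : ℕ, i ≤ r → (I i).colon (maximalIdeal A) =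
      I i + Ideal.span {∏ j ∈ Finset.univ.filter (fun j : Fin r => i ≤ (j : ℕ)), a j}) ∧
    (∀ i : Fin r, I (i : ℕ) = I ((i : ℕ) + 1) ↔ IsUnit (a i)) :=
  stmt_10_general a v hv0 hsoc hfac I hI
end

section
/- Let A be an Artinian local ring with maximal ideal M whose socle satisfies (0 : M) = vA for some v ≠ 0 (A is zero-dimensional Gorenstein), and let b ∈ A be nonzero. Then there exists c ∈ A with 0 ≠ (0 : cA) ⊊ (0 : bA) (i.e., the nonzero Gorenstein ideal (0 : bA) strictly contains another nonzero Gorenstein ideal) if and only if b can be written as a product of two non-units of A. -/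
/-!
In an Artinian local ring `A` with socle `vA`, `I ↦ (0 : I)` is an involution on ideals, by
induction along covers `I ⋖ I + xA`: if `(0 : (0 : I)) = I` and `x M ⊆ I`, then `a ↦ a x` maps
`(0 : I)` into the simple socle `vA`, and comparing with this functional shows that every `y`
killed by `(0 : I + xA)` lies in `I + xA`. So annihilation reverses inclusions strictly:
`(0 : c) < (0 : b)` iff `bA < cA`, i.e. `b = t c` with `t` a non-unit, and `(0 : c) ≠ 0` iff `c`
is a non-unit.
-/

open IsLocalRing

namespace Ideal

variable {A : Type*} [CommRing A]

theorem annihilator_top_eq_bot : (⊤ : Ideal A).annihilator = ⊥ :=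
  eq_bot_iff.2 fun a ha => by simpa using Submodule.mem_annihilator.1 ha 1 trivial

theorem mem_annihilator_sup_span_singleton {I : Ideal A} {x a : A} :
    a ∈ (I ⊔ span {x}).annihilator ↔ a ∈ I.annihilator ∧ a * x = 0 := by
  rw [Submodule.annihilator_sup, Submodule.mem_inf, ← submodule_span_eq,
    Submodule.mem_annihilator_span_singleton, smul_eq_mul]

theorem le_annihilator_annihilator (I : Ideal A) : I ≤ I.annihilator.annihilator :=
  fun x hx => Submodule.mem_annihilator.2 fun a ha => by
    rw [smul_eq_mul, mul_comm]; exact Submodule.mem_annihilator.1 ha x hx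

variable [IsLocalRing A]

theorem mul_mem_of_covBy {I J : Ideal A} (hIJ : I ⋖ J) {x m : A} (hx : x ∈ J)
    (hm : m ∈ maximalIdeal A) : x * m ∈ I := by
  by_contra hxm
  have hxI : x ∉ I := fun hxI => hxm (I.mul_mem_right m hxI)
  have hJ : span {x * m} ⊔ I = J := by
    refine (hIJ.eq_or_eq le_sup_right
      (sup_le ((span_singleton_le_iff_mem J).2 (J.mul_mem_right m hx)) hIJ.le)).resolve_left ?_
    exact fun h => hxm (h ▸ mem_sup_left (mem_span_singleton_self _))
  obtain ⟨r, i, hi, hri⟩ := mem_span_singleton_sup.1 (hJ ▸ hx : x ∈ span {x * m} ⊔ I)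
  obtain ⟨u, hu⟩ := isUnit_one_sub_self_of_mem_nonunits (r * m)
    ((maximalIdeal A).mul_mem_left r hm)
  have hxu : x * u ∈ I := by
    rw [hu, show x * (1 - r * m) = i by linear_combination -hri]; exact hi
  exact hxI (by simpa using I.mul_mem_right (↑u⁻¹ : A) hxu)

section Socle

variable {v : A} (hsoc : (maximalIdeal A).annihilator = span {v})
include hsoc

theorem mul_eq_zero_of_annihilator_maximalIdeal_eq {m : A} (hm : m ∈ maximalIdeal A) :
    v * m = 0 :=
  Submodule.mem_annihilator.1 (hsoc ▸ mem_span_singleton_self v) m hm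

theorem isUnit_of_mul_ne_zero_of_annihilator_maximalIdeal_eq {t : A} (ht : t * v ≠ 0) :
    IsUnit t := by
  by_contra h
  exact ht ((mul_comm t v).trans
    (mul_eq_zero_of_annihilator_maximalIdeal_eq hsoc ((mem_maximalIdeal t).2 h)))

theorem exists_mul_eq_of_annihilator_maximalIdeal_eq {y : A}
    (hy : ∀ m ∈ maximalIdeal A, y * m = 0) : ∃ t, t * v = y :=
  mem_span_singleton'.1 (hsoc ▸ Submodule.mem_annihilator.2 hy)

theorem annihilator_annihilator_sup_span_singleton {I : Ideal A}
    (hI : I.annihilator.annihilator = I) {x : A} (hx : ∀ m ∈ maximalIdeal A, x * m ∈ I) :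
    (I ⊔ span {x}).annihilator.annihilator = I ⊔ span {x} := by
  by_cases hxI : x ∈ I
  · rwa [sup_eq_left.2 ((span_singleton_le_iff_mem I).2 hxI)]
  refine le_antisymm (fun y hy => ?_) (le_annihilator_annihilator _)
  have hax : ∀ a ∈ I.annihilator, ∃ s, s * v = a * x := fun a ha =>
    exists_mul_eq_of_annihilator_maximalIdeal_eq hsoc fun m hm => by
      rw [mul_assoc]
      exact Submodule.mem_annihilator.1 ha _ (hx m hm)
  have hay : ∀ a ∈ I.annihilator, a * x = 0 → a * y = 0 := fun a ha hax =>
    (mul_comm a y).trans <|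
      Submodule.mem_annihilator.1 hy a (mem_annihilator_sup_span_singleton.2 ⟨ha, hax⟩)
  obtain ⟨a₀, ha₀, ha₀x⟩ : ∃ a₀ ∈ I.annihilator, a₀ * x ≠ 0 := by
    by_contra! h
    exact hxI (hI ▸ Submodule.mem_annihilator.2 fun a ha => (mul_comm x a).trans (h a ha))
  obtain ⟨t₀, ht₀⟩ := hax a₀ ha₀
  obtain ⟨u, rfl⟩ := isUnit_of_mul_ne_zero_of_annihilator_maximalIdeal_eq hsoc (ht₀ ▸ ha₀x)
  set a₁ := (↑u⁻¹ : A) * a₀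
  have ha₁ : a₁ ∈ I.annihilator := I.annihilator.mul_mem_left _ ha₀
  have ha₁x : a₁ * x = v := by simp [a₁, mul_assoc, ← ht₀]
  have hay_eq : ∀ a ∈ I.annihilator, ∀ s, s * v = a * x → a * y = s * (a₁ * y) :=
    fun a ha s hs => by
      have := hay (a - s * a₁) (sub_mem ha (I.annihilator.mul_mem_left s ha₁))
        (by rw [sub_mul, mul_assoc, ha₁x, hs, sub_self])
      linear_combination this
  obtain ⟨t, ht⟩ := exists_mul_eq_of_annihilator_maximalIdeal_eq hsoc fun m hm => by
    rw [mul_right_comm]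
    refine hay _ (I.annihilator.mul_mem_right m ha₁) ?_
    rw [mul_right_comm, ha₁x, mul_eq_zero_of_annihilator_maximalIdeal_eq hsoc hm]
  have hytx : y - t * x ∈ I := hI ▸ Submodule.mem_annihilator.2 fun a ha => by
    obtain ⟨s, hs⟩ := hax a ha
    linear_combination hay_eq a ha s hs - s * ht + t * hs
  simpa using add_mem (mem_sup_left hytx)
    (mem_sup_right (mul_mem_left _ t (mem_span_singleton_self x)))

theorem annihilator_annihilator [IsArtinianRing A] (J : Ideal A) :
    J.annihilator.annihilator = J := by
  induction J using WellFoundedLT.induction with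
  | _ J ih =>
    rcases eq_or_ne J ⊥ with rfl | hJ
    · rw [Submodule.annihilator_bot, annihilator_top_eq_bot]
    obtain ⟨I, -, hIJ⟩ := exists_le_covBy_of_lt (bot_lt_iff_ne_bot.2 hJ)
    obtain ⟨x, hxJ, hxI⟩ := SetLike.exists_of_lt hIJ.lt
    have hJ : I ⊔ span {x} = J := by
      refine (hIJ.eq_or_eq le_sup_left
        (sup_le hIJ.le ((span_singleton_le_iff_mem J).2 hxJ))).resolve_left fun h => hxI ?_
      exact h ▸ mem_sup_right (mem_span_singleton_self x)
    rw [← hJ]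
    exact annihilator_annihilator_sup_span_singleton hsoc (ih I hIJ.lt)
      fun m hm => mul_mem_of_covBy hIJ hxJ hm

theorem annihilator_le_annihilator_iff [IsArtinianRing A] {I J : Ideal A} :
    I.annihilator ≤ J.annihilator ↔ J ≤ I :=
  ⟨fun h => by simpa only [annihilator_annihilator hsoc] using Submodule.annihilator_mono h,
    Submodule.annihilator_mono⟩

theorem annihilator_lt_annihilator_iff [IsArtinianRing A] {I J : Ideal A} :
    I.annihilator < J.annihilator ↔ J < I := by
  simp only [lt_iff_le_not_ge, annihilator_le_annihilator_iff hsoc]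

theorem annihilator_eq_bot_iff [IsArtinianRing A] {I : Ideal A} :
    I.annihilator = ⊥ ↔ I = ⊤ := by
  rw [← annihilator_top_eq_bot, (Function.LeftInverse.injective
    (annihilator_annihilator hsoc : Function.LeftInverse _ _)).eq_iff]

end Socle

theorem span_singleton_lt_span_singleton_iff {b c : A} (hb : b ≠ 0) :
    span {b} < span {c} ↔ ∃ t, ¬IsUnit t ∧ b = t * c := by
  rw [lt_iff_le_not_ge, span_singleton_le_span_singleton, span_singleton_le_span_singleton]
  constructor
  · rintro ⟨⟨t, rfl⟩, hnot⟩
    exact ⟨t, fun ht => hnot (ht.mul_right_dvd.2 dvd_rfl), mul_comm c t⟩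
  · rintro ⟨t, ht, rfl⟩
    refine ⟨dvd_mul_left c t, fun ⟨s, hs⟩ => hb ?_⟩
    obtain ⟨u, hu⟩ := isUnit_one_sub_self_of_mem_nonunits (t * s)
      ((maximalIdeal A).mul_mem_right s ((mem_maximalIdeal t).2 ht))
    have hcu : c * u = 0 := by rw [hu]; linear_combination hs
    rw [u.isUnit.mul_left_eq_zero.1 hcu, mul_zero]

end Ideal

theorem stmt_11_general {A : Type*} [CommRing A] [IsArtinianRing A] [IsLocalRing A]
    (v : A)
    (hsoc : (⊥ : Ideal A).colon (maximalIdeal A) = Ideal.span {v})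
    (b : A) (hb : b ≠ 0) :
    (∃ c : A, (⊥ : Ideal A).colon (Ideal.span {c}) ≠ ⊥ ∧
        (⊥ : Ideal A).colon (Ideal.span {c}) < (⊥ : Ideal A).colon (Ideal.span {b})) ↔
      ∃ p q : A, ¬ IsUnit p ∧ ¬ IsUnit q ∧ b = p * q := by
  simp only [Submodule.bot_colon] at hsoc ⊢
  simp only [ne_eq, Ideal.annihilator_eq_bot_iff hsoc, Ideal.annihilator_lt_annihilator_iff hsoc,
    Ideal.span_singleton_lt_span_singleton_iff hb, Ideal.span_singleton_eq_top]
  constructor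
  · rintro ⟨c, hc, t, ht, rfl⟩
    exact ⟨t, c, ht, hc, rfl⟩
  · rintro ⟨p, q, hp, hq, rfl⟩
    exact ⟨p, hp, q, hq, mul_comm p q⟩

/-- **Proposition 3.2 (i).** Let `A` be a zero-dimensional Gorenstein local ring (Artinian
local with socle `(0 : M) = vA`, `v ≠ 0`) and let `b ∈ A` be nonzero. Then the nonzero
Gorenstein ideal `(0 : bA)` strictly contains another nonzero Gorenstein ideal `(0 : cA)`
if and only if `b` can be written as the product of two non-units. -/
theorem stmt_11 {A : Type*} [CommRing A] [IsArtinianRing A] [IsLocalRing A]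
    (v : A) (hv0 : v ≠ 0)
    (hsoc : (⊥ : Ideal A).colon (maximalIdeal A) = Ideal.span {v})
    (b : A) (hb : b ≠ 0) :
    (∃ c : A, (⊥ : Ideal A).colon (Ideal.span {c}) ≠ ⊥ ∧
        (⊥ : Ideal A).colon (Ideal.span {c}) < (⊥ : Ideal A).colon (Ideal.span {b})) ↔
      ∃ p q : A, ¬ IsUnit p ∧ ¬ IsUnit q ∧ b = p * q :=
  stmt_11_general v hsoc b hb
end

section
/- Let A be an Artinian local ring with maximal ideal M whose socle satisfies (0 : M) = vA for some v ≠ 0 (A is zero-dimensional Gorenstein), and suppose A has exponent t + 1 with t ≥ 1, i.e., Mᵗ ≠ 0 and M^{t+1} = 0. Let b ∈ A be nonzero and set I = (0 : bA). If A/I has exponent t, i.e., Mᵗ ⊆ I and M^{t-1} ⊈ I, then b ∈ M \ M²; that is, the annihilator (0 : I) = bA of such a Gorenstein ideal I is generated by a minimal generator of the maximal ideal. -/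
open IsLocalRing

namespace Ideal

variable {R : Type*} [CommRing R]

theorem eq_bot_of_le_colon_bot_span_singleton_of_isUnit {J : Ideal R} {b : R} (hb : IsUnit b)
    (hJ : J ≤ (⊥ : Ideal R).colon (span {b})) : J = ⊥ := by
  refine le_bot_iff.mp fun x hx => ?_
  have hxb : x * b = 0 := by simpa [mem_colon_span_singleton] using hJ hx
  exact mem_bot.mpr (hb.mul_left_eq_zero.mp hxb)

theorem pow_le_colon_bot_span_singleton_of_mem_pow {I : Ideal R} {b : R} {n k : ℕ}
    (hb : b ∈ I ^ k) (hI : I ^ (n + k) = ⊥) : I ^ n ≤ (⊥ : Ideal R).colon (span {b}) := by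
  intro x hx
  rw [mem_colon_span_singleton, ← hI, pow_add]
  exact mul_mem_mul hx hb

end Ideal

theorem IsLocalRing.mem_maximalIdeal_of_le_colon_bot_span_singleton {R : Type*} [CommRing R]
    [IsLocalRing R] {J : Ideal R} {b : R} (hJ0 : J ≠ ⊥)
    (hJ : J ≤ (⊥ : Ideal R).colon (Ideal.span {b})) : b ∈ maximalIdeal R := by
  by_contra hbM
  exact hJ0 (Ideal.eq_bot_of_le_colon_bot_span_singleton_of_isUnit (notMem_maximalIdeal.mp hbM) hJ)

theorem stmt_12_general {A : Type*} [CommRing A] [IsLocalRing A]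
    {t : ℕ}
    (hMt : (maximalIdeal A) ^ t ≠ ⊥) (hMt1 : (maximalIdeal A) ^ (t + 1) = ⊥)
    (b : A)
    (I : Ideal A) (hIdef : I = (⊥ : Ideal A).colon (Ideal.span {b}))
    (hMtI : (maximalIdeal A) ^ t ≤ I)
    (hMt1I : ¬ (maximalIdeal A) ^ (t - 1) ≤ I) :
    b ∈ maximalIdeal A ∧ b ∉ (maximalIdeal A) ^ 2 := by
  subst hIdef
  refine ⟨mem_maximalIdeal_of_le_colon_bot_span_singleton hMt hMtI, fun hb2 => hMt1I ?_⟩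
  have hvanish : (maximalIdeal A) ^ (t - 1 + 2) = ⊥ :=
    eq_bot_mono (Ideal.pow_le_pow_right (by omega)) hMt1
  exact Ideal.pow_le_colon_bot_span_singleton_of_mem_pow hb2 hvanish

/-- **Proposition 3.6 (ii)(a).** Let `A` be a zero-dimensional Gorenstein local ring of
exponent `t + 1` (so `Mᵗ ≠ 0` and `M^{t+1} = 0`), with socle `(0 : M) = vA`, `v ≠ 0`.
Let `b ≠ 0` and `I = (0 : bA)`. If `A/I` has exponent `t`, i.e. `Mᵗ ⊆ I` and `M^{t-1} ⊈ I`,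
then `b ∈ M \ M²`: the annihilator `(0 : I) = bA` is generated by a minimal generator of the
maximal ideal. -/
theorem stmt_12 {A : Type*} [CommRing A] [IsArtinianRing A] [IsLocalRing A]
    {t : ℕ} (ht : 1 ≤ t)
    (hMt : (maximalIdeal A) ^ t ≠ ⊥) (hMt1 : (maximalIdeal A) ^ (t + 1) = ⊥)
    (v : A) (hv0 : v ≠ 0)
    (hsoc : (⊥ : Ideal A).colon (maximalIdeal A) = Ideal.span {v})
    (b : A) (hb : b ≠ 0)
    (I : Ideal A) (hIdef : I = (⊥ : Ideal A).colon (Ideal.span {b}))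
    (hMtI : (maximalIdeal A) ^ t ≤ I)
    (hMt1I : ¬ (maximalIdeal A) ^ (t - 1) ≤ I) :
    b ∈ maximalIdeal A ∧ b ∉ (maximalIdeal A) ^ 2 :=
  stmt_12_general hMt hMt1 b I hIdef hMtI hMt1I
end

section
/- Let A be a local ring with maximal ideal M and let γ be an n×n matrix over A with det(γ) ∈ M \ M². Then there exist invertible n×n matrices θ₁, θ₂ over A and an element d ∈ A with d·A = det(γ)·A such that θ₁·γ·θ₂ is the diagonal matrix diag(d, 1, …, 1). -/
open IsLocalRing Matrix

/-!
Over a local ring, a matrix with a unit entry is equivalent, after permuting that entry into the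
corner and eliminating its row and column (the Schur complement), to `diag(S, 1)` with `det S`
associated to its determinant. If `det γ ∉ M²` and `γ` has size at least two, some entry must be a
unit, as otherwise `det γ ∈ M ^ n ⊆ M²`; so the reduction can be repeated down to a `1 × 1` matrix.
-/

namespace Matrix

variable {R : Type*} [CommRing R] {m n : Type*} [Fintype m] [DecidableEq m] [Fintype n]
  [DecidableEq n]

def Equivalent (γ δ : Matrix n n R) : Prop :=
  ∃ θ₁ θ₂ : Matrix n n R, IsUnit θ₁ ∧ IsUnit θ₂ ∧ θ₁ * γ * θ₂ = δ

namespace Equivalent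

variable {γ δ ε : Matrix n n R}

theorem refl (γ : Matrix n n R) : γ.Equivalent γ :=
  ⟨1, 1, isUnit_one, isUnit_one, by rw [Matrix.one_mul, Matrix.mul_one]⟩

theorem symm (h : γ.Equivalent δ) : δ.Equivalent γ := by
  obtain ⟨θ₁, θ₂, h₁, h₂, rfl⟩ := h
  refine ⟨θ₁⁻¹, θ₂⁻¹, isUnit_nonsing_inv_iff.2 h₁, isUnit_nonsing_inv_iff.2 h₂, ?_⟩
  rw [← Matrix.mul_assoc, ← Matrix.mul_assoc, nonsing_inv_mul _ ((isUnit_iff_isUnit_det _).1 h₁),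
    Matrix.one_mul, Matrix.mul_assoc, mul_nonsing_inv _ ((isUnit_iff_isUnit_det _).1 h₂),
    Matrix.mul_one]

theorem trans (h : γ.Equivalent δ) (h' : δ.Equivalent ε) : γ.Equivalent ε := by
  obtain ⟨θ₁, θ₂, h₁, h₂, rfl⟩ := h
  obtain ⟨θ₁', θ₂', h₁', h₂', rfl⟩ := h'
  exact ⟨θ₁' * θ₁, θ₂ * θ₂', h₁'.mul h₁, h₂.mul h₂', by simp only [Matrix.mul_assoc]⟩

theorem associated_det (h : γ.Equivalent δ) : Associated γ.det δ.det := by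
  obtain ⟨θ₁, θ₂, h₁, h₂, rfl⟩ := h
  obtain ⟨u₁, hu₁⟩ := (isUnit_iff_isUnit_det _).1 h₁
  obtain ⟨u₂, hu₂⟩ := (isUnit_iff_isUnit_det _).1 h₂
  exact ⟨u₁ * u₂, by rw [det_mul, det_mul, ← hu₁, ← hu₂]; push_cast; ring⟩

theorem span_det_eq (h : γ.Equivalent δ) : Ideal.span {δ.det} = Ideal.span {γ.det} := by
  obtain ⟨u, hu⟩ := h.associated_det
  rw [← hu, Ideal.span_singleton_mul_right_unit u.isUnit]

theorem submatrix (h : γ.Equivalent δ) (e : m ≃ n) :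
    (γ.submatrix e e).Equivalent (δ.submatrix e e) := by
  obtain ⟨θ₁, θ₂, h₁, h₂, rfl⟩ := h
  refine ⟨θ₁.submatrix e e, θ₂.submatrix e e, h₁.map (reindexRingEquiv R e.symm),
    h₂.map (reindexRingEquiv R e.symm), ?_⟩
  rw [submatrix_mul_equiv, submatrix_mul_equiv]

theorem fromBlocks_zero_zero (h : γ.Equivalent δ) {D : Matrix m m R} (hD : IsUnit D) :
    (fromBlocks γ 0 0 D).Equivalent (fromBlocks δ 0 0 1) := by
  obtain ⟨θ₁, θ₂, h₁, h₂, rfl⟩ := h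
  refine ⟨fromBlocks θ₁ 0 0 D⁻¹, fromBlocks θ₂ 0 0 1, ?_, ?_, ?_⟩
  · rw [isUnit_iff_isUnit_det, det_fromBlocks_zero₂₁, det_nonsing_inv]
    exact ((isUnit_iff_isUnit_det _).1 h₁).mul ((isUnit_iff_isUnit_det _).1 hD).ringInverse
  · rw [isUnit_iff_isUnit_det, det_fromBlocks_zero₂₁, det_one, mul_one]
    exact (isUnit_iff_isUnit_det _).1 h₂
  · simp [fromBlocks_multiply, nonsing_inv_mul _ ((isUnit_iff_isUnit_det _).1 hD)]

end Equivalent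

theorem equivalent_submatrix (γ : Matrix n n R) (σ τ : Equiv.Perm n) :
    γ.Equivalent (γ.submatrix σ τ) := by
  have isUnit_permMatrix (ρ : Equiv.Perm n) : IsUnit (ρ.permMatrix R) := by
    rw [isUnit_iff_isUnit_det, det_permutation]
    exact (Equiv.Perm.sign ρ).isUnit.map (Int.castRingHom R)
  refine ⟨σ.permMatrix R, τ⁻¹.permMatrix R, isUnit_permMatrix σ, isUnit_permMatrix τ⁻¹, ?_⟩
  rw [PEquiv.toMatrix_toPEquiv_mul, PEquiv.mul_toMatrix_toPEquiv]
  rfl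

theorem equivalent_fromBlocks_schur (A : Matrix m m R) (B : Matrix m n R) (C : Matrix n m R)
    {D : Matrix n n R} (hD : IsUnit D) :
    (fromBlocks A B C D).Equivalent (fromBlocks (A - B * D⁻¹ * C) 0 0 1) := by
  let := hD.invertible
  have hL : IsUnit (fromBlocks 1 (B * ⅟D) 0 1 : Matrix (m ⊕ n) (m ⊕ n) R) := by
    simp [isUnit_iff_isUnit_det]
  have hU : IsUnit (fromBlocks 1 0 (⅟D * C) 1 : Matrix (m ⊕ n) (m ⊕ n) R) := by
    simp [isUnit_iff_isUnit_det]
  rw [← invOf_eq_nonsing_inv]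
  refine Equivalent.symm ?_ |>.trans ((Equivalent.refl _).fromBlocks_zero_zero hD)
  exact ⟨_, _, hL, hU, (fromBlocks_eq_of_invertible₂₂ A B C D).symm⟩

theorem det_mem_pow_card_of_forall_mem {I : Ideal R} {γ : Matrix n n R} (h : ∀ i j, γ i j ∈ I) :
    γ.det ∈ I ^ Fintype.card n := by
  rw [det_eq_sign_charpoly_coeff]
  exact Ideal.mul_mem_left _ _ (by simpa using coeff_charpoly_mem_ideal_pow h 0)

theorem exists_isUnit_apply_of_det_notMem_sq [IsLocalRing R] {γ : Matrix n n R}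
    (hn : 2 ≤ Fintype.card n) (h : γ.det ∉ maximalIdeal R ^ 2) : ∃ i j, IsUnit (γ i j) := by
  by_contra! hγ
  exact h <| Ideal.pow_le_pow_right hn <|
    det_mem_pow_card_of_forall_mem fun i j => (mem_maximalIdeal _).2 (hγ i j)

theorem exists_equivalent_fromBlocks_one_of_isUnit_apply {k : ℕ}
    {γ : Matrix (Fin (k + 1)) (Fin (k + 1)) R} {i j : Fin (k + 1)} (hij : IsUnit (γ i j)) :
    ∃ S : Matrix (Fin k) (Fin k) R, γ.Equivalent
      ((fromBlocks S 0 0 (1 : Matrix (Fin 1) (Fin 1) R)).submatrix finSumFinEquiv.symm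
        finSumFinEquiv.symm) := by
  let γ' := γ.submatrix (Equiv.swap i (Fin.last k)) (Equiv.swap j (Fin.last k))
  let B := γ'.submatrix (finSumFinEquiv (n := 1)) finSumFinEquiv
  have hB : IsUnit B.toBlocks₂₂ := by
    have hlast : Fin.natAdd k (0 : Fin 1) = Fin.last k := rfl
    rw [isUnit_iff_isUnit_det, det_unique]
    simpa [B, γ', toBlocks₂₂, hlast] using hij
  have hBS := fromBlocks_toBlocks B ▸ equivalent_fromBlocks_schur _ _ _ hB
  have hγ' : γ' = B.submatrix finSumFinEquiv.symm finSumFinEquiv.symm := by simp [B]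
  exact ⟨_, (equivalent_submatrix γ _ _).trans (hγ' ▸ hBS.submatrix finSumFinEquiv.symm)⟩

theorem exists_equivalent_diagonal_of_det_notMem_sq [IsLocalRing R] :
    ∀ {k : ℕ} (γ : Matrix (Fin (k + 1)) (Fin (k + 1)) R), γ.det ∉ maximalIdeal R ^ 2 →
      ∃ d, γ.Equivalent (diagonal fun i => if (i : ℕ) = 0 then d else 1)
  | 0, γ, _ => ⟨γ 0 0, by
      convert Equivalent.refl γ
      ext i j
      fin_cases i; fin_cases j
      rfl⟩
  | k + 1, γ, hγ => by
    obtain ⟨i, j, hij⟩ := exists_isUnit_apply_of_det_notMem_sq (by simp) hγ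
    obtain ⟨S, hS⟩ := exists_equivalent_fromBlocks_one_of_isUnit_apply hij
    have hS_det : S.det ∉ maximalIdeal R ^ 2 := fun h => hγ <| Ideal.mem_of_dvd _
      (by simpa [det_fromBlocks_zero₂₁] using hS.associated_det.symm.dvd) h
    obtain ⟨d, hd⟩ := exists_equivalent_diagonal_of_det_notMem_sq S hS_det
    refine ⟨d, hS.trans ?_⟩
    convert (hd.fromBlocks_zero_zero isUnit_one).submatrix finSumFinEquiv.symm using 1
    rw [← diagonal_one, fromBlocks_diagonal, submatrix_diagonal_equiv]
    congr 1
    funext i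
    obtain ⟨i | i, rfl⟩ := finSumFinEquiv.surjective i <;> simp

end Matrix

theorem stmt_17_general {A : Type*} [CommRing A] [IsLocalRing A]
    {n : ℕ} (γ : Matrix (Fin n) (Fin n) A)
    (hdet₂ : γ.det ∉ (maximalIdeal A) ^ 2) :
    ∃ θ₁ θ₂ : Matrix (Fin n) (Fin n) A, ∃ d : A,
      IsUnit θ₁ ∧ IsUnit θ₂ ∧ Ideal.span {d} = Ideal.span {γ.det} ∧
      θ₁ * γ * θ₂ = Matrix.diagonal (fun i : Fin n => if (i : ℕ) = 0 then d else 1) := by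
  cases n with
  | zero => exact ⟨1, 1, γ.det, isUnit_one, isUnit_one, rfl, Subsingleton.elim _ _⟩
  | succ k =>
    obtain ⟨d, θ₁, θ₂, h₁, h₂, hγ⟩ := exists_equivalent_diagonal_of_det_notMem_sq γ hdet₂
    refine ⟨θ₁, θ₂, d, h₁, h₂, ?_, hγ⟩
    simpa [Fin.prod_univ_succ] using Equivalent.span_det_eq ⟨θ₁, θ₂, h₁, h₂, hγ⟩

/-- **Lemma 5.5 (ii).** Let `A` be a (Noetherian) local ring with maximal ideal `M` and let
`γ` be an `n × n` matrix with `det(γ) ∈ M \ M²`. Then there are invertible matrices `θ₁, θ₂`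
and an element `d` with `dA = det(γ)A` such that `θ₁·γ·θ₂ = diag(d, 1, …, 1)`. -/
theorem stmt_17 {A : Type*} [CommRing A] [IsNoetherianRing A] [IsLocalRing A]
    {n : ℕ} (γ : Matrix (Fin n) (Fin n) A)
    (hdet₁ : γ.det ∈ maximalIdeal A) (hdet₂ : γ.det ∉ (maximalIdeal A) ^ 2) :
    ∃ θ₁ θ₂ : Matrix (Fin n) (Fin n) A, ∃ d : A,
      IsUnit θ₁ ∧ IsUnit θ₂ ∧ Ideal.span {d} = Ideal.span {γ.det} ∧
      θ₁ * γ * θ₂ = Matrix.diagonal (fun i : Fin n => if (i : ℕ) = 0 then d else 1) :=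
  stmt_17_general γ hdet₂
end
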